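/- For all integers k_1, k_2 ∈ ℤ with k_2 ≤ k_1, there exist nonnegative integers n and t such that s_2(n + t) − s_2(n) = k_1 and s_2(n + 2t) − s_2(n) = k_2 (differences taken in ℤ). -/

import Mathlib

/-- The binary sum-of-digits function. -/
def s2 (n : ℕ) : ℕ := (Nat.digits 2 n).sum

lemma s2_zero : s2 0 = 0 := by simp [s2]

lemma s2_rec (n : ℕ) (hn : n ≠ 0) : s2 n = n % 2 + s2 (n / 2) := by
  unfold s2
  rw [Nat.digits_def' (by norm_num : (1:ℕ) < 2) (Nat.pos_of_ne_zero hn)]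
  simp

lemma s2_one : s2 1 = 1 := by rw [s2_rec 1 (by norm_num)]; norm_num [s2_zero]

lemma s2_two : s2 2 = 1 := by rw [s2_rec 2 (by norm_num)]; norm_num [s2_one]

lemma s2_three : s2 3 = 2 := by rw [s2_rec 3 (by norm_num)]; norm_num [s2_one]

lemma s2_four : s2 4 = 1 := by rw [s2_rec 4 (by norm_num)]; norm_num [s2_two]

lemma s2_two_mul (a : ℕ) : s2 (2 * a) = s2 a := by
  rcases Nat.eq_zero_or_pos a with rfl | ha
  · rfl
  · rw [s2_rec (2 * a) (by omega)]
    simp [Nat.mul_div_cancel_left a (by norm_num : 0 < 2)]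

lemma s2_two_mul_add_one (a : ℕ) : s2 (2 * a + 1) = s2 a + 1 := by
  rw [s2_rec (2 * a + 1) (by omega)]
  have h1 : (2 * a + 1) % 2 = 1 := by omega
  have h2 : (2 * a + 1) / 2 = a := by omega
  rw [h1, h2]; omega

/-- Key additivity lemma: adding disjoint binary blocks adds digit sums. -/
lemma s2_add_pow_mul : ∀ (m x y : ℕ), y < 2 ^ m → s2 (y + 2 ^ m * x) = s2 y + s2 x := by
  intro m
  induction m with
  | zero =>
    intro x y hy
    interval_cases y
    simp [s2_zero]
  | succ m ih =>
    intro x y hy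
    have hpow : (2:ℕ) ^ (m + 1) = 2 * 2 ^ m := by ring
    have h2x : (2:ℕ) ^ (m + 1) * x = 2 * (2 ^ m * x) := by rw [hpow]; ring
    have hq : y / 2 < 2 ^ m := by omega
    rcases Nat.even_or_odd y with ⟨c, hc⟩ | ⟨c, hc⟩
    · have hc2 : y / 2 = c := by omega
      have hkey : y + 2 ^ (m + 1) * x = 2 * (c + 2 ^ m * x) := by omega
      rw [hkey, s2_two_mul, ih x c (by omega)]
      have : s2 y = s2 c := by rw [hc, ← two_mul, s2_two_mul]
      rw [this]
    · have hc2 : y / 2 = c := by omega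
      have hkey : y + 2 ^ (m + 1) * x = 2 * (c + 2 ^ m * x) + 1 := by omega
      rw [hkey, s2_two_mul_add_one, ih x c (by omega)]
      have : s2 y = s2 c + 1 := by rw [hc, s2_two_mul_add_one]
      rw [this]; ring

lemma s2_pow (k : ℕ) : s2 (2 ^ k) = 1 := by
  have := s2_add_pow_mul k 1 0 (Nat.pow_pos (by norm_num))
  simpa [s2_zero, s2_one] using this

lemma s2_pow_sub_one : ∀ k : ℕ, s2 (2 ^ k - 1) = k := by
  intro k
  induction k with
  | zero => simpa using s2_zero
  | succ k ih =>
    have hk : (1:ℕ) ≤ 2 ^ k := Nat.one_le_two_pow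
    have h1 : (2:ℕ) ^ (k + 1) - 1 = 2 * (2 ^ k - 1) + 1 := by
      have : (2:ℕ) ^ (k + 1) = 2 * 2 ^ k := by ring
      omega
    rw [h1, s2_two_mul_add_one, ih]

lemma s2_pow_add_one (a : ℕ) (ha : 1 ≤ a) : s2 (2 ^ a + 1) = 2 := by
  have h : (2:ℕ) ^ a + 1 = 1 + 2 ^ a * 1 := by ring
  have hlt : (1:ℕ) < 2 ^ a :=
    lt_of_lt_of_le (by norm_num) (Nat.pow_le_pow_right (by norm_num) ha)
  rw [h, s2_add_pow_mul a 1 1 hlt, s2_one]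

/-- Base construction: for any `a ≥ 1`, `b`, a witness with differences `(1+b)-a` and `(2+b)-a`. -/
lemma base_witness (a b : ℕ) (ha : 1 ≤ a) :
    ∃ n t : ℕ, (s2 (n + t) : ℤ) - (s2 n : ℤ) = (1 + b : ℤ) - a ∧
      (s2 (n + 2 * t) : ℤ) - (s2 n : ℤ) = (2 + b : ℤ) - a := by
  obtain ⟨A, hA⟩ : ∃ A, (2:ℕ) ^ a = A + 1 :=
    ⟨2 ^ a - 1, by have : (1:ℕ) ≤ 2 ^ a := Nat.one_le_two_pow; omega⟩
  obtain ⟨B, hB⟩ : ∃ B, (2:ℕ) ^ b = B + 1 :=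
    ⟨2 ^ b - 1, by have : (1:ℕ) ≤ 2 ^ b := Nat.one_le_two_pow; omega⟩
  have h4 : (2:ℕ) ^ (b + 2) = 4 * 2 ^ b := by ring
  have hBlt : (2:ℕ) ^ b - 1 < 2 ^ (b + 2) := by omega
  have hBlt2 : 2 * ((2:ℕ) ^ b - 1) < 2 ^ (b + 2) := by omega
  have hs2n : s2 ((2 ^ a - 1) * 2 ^ (b + 2)) = a := by
    have h2 : (2 ^ a - 1) * 2 ^ (b + 2) = 0 + 2 ^ (b + 2) * (2 ^ a - 1) := by ring
    rw [h2, s2_add_pow_mul (b + 2) (2 ^ a - 1) 0 (Nat.pow_pos (by norm_num)),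
      s2_zero, s2_pow_sub_one]
    omega
  refine ⟨(2 ^ a - 1) * 2 ^ (b + 2), 2 ^ (b + 2) + (2 ^ b - 1), ?_, ?_⟩
  · have h1 : (2 ^ a - 1) * 2 ^ (b + 2) + (2 ^ (b + 2) + (2 ^ b - 1))
        = (2 ^ b - 1) + 2 ^ (b + 2) * 2 ^ a := by
      rw [h4, hA, hB]
      simp only [Nat.add_sub_cancel]
      ring
    rw [h1, s2_add_pow_mul (b + 2) (2 ^ a) (2 ^ b - 1) hBlt, s2_pow,
      s2_pow_sub_one, hs2n]
    push_cast; ring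
  · have h1 : (2 ^ a - 1) * 2 ^ (b + 2) + 2 * (2 ^ (b + 2) + (2 ^ b - 1))
        = (2 * (2 ^ b - 1)) + 2 ^ (b + 2) * (2 ^ a + 1) := by
      rw [h4, hA, hB]
      simp only [Nat.add_sub_cancel]
      ring
    rw [h1, s2_add_pow_mul (b + 2) (2 ^ a + 1) (2 * (2 ^ b - 1)) hBlt2,
      s2_two_mul, s2_pow_sub_one, s2_pow_add_one a ha, hs2n]
    push_cast; ring

/-- Step: increase the first difference by 1, keeping the second fixed. -/
lemma step_witness (k₁ k₂ : ℤ)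
    (hw : ∃ n t : ℕ, (s2 (n + t) : ℤ) - (s2 n : ℤ) = k₁ ∧
      (s2 (n + 2 * t) : ℤ) - (s2 n : ℤ) = k₂) :
    ∃ n t : ℕ, (s2 (n + t) : ℤ) - (s2 n : ℤ) = k₁ + 1 ∧
      (s2 (n + 2 * t) : ℤ) - (s2 n : ℤ) = k₂ := by
  obtain ⟨n, t, h1, h2⟩ := hw
  refine ⟨8 * n + 2, 8 * t + 1, ?_, ?_⟩
  · have e1 : 8 * n + 2 + (8 * t + 1) = 3 + 2 ^ 3 * (n + t) := by ring
    have e2 : 8 * n + 2 = 2 + 2 ^ 3 * n := by ring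
    rw [e1, e2, s2_add_pow_mul 3 (n + t) 3 (by norm_num),
      s2_add_pow_mul 3 n 2 (by norm_num), s2_three, s2_two]
    push_cast; omega
  · have e1 : 8 * n + 2 + 2 * (8 * t + 1) = 4 + 2 ^ 3 * (n + 2 * t) := by ring
    have e2 : 8 * n + 2 = 2 + 2 ^ 3 * n := by ring
    rw [e1, e2, s2_add_pow_mul 3 (n + 2 * t) 4 (by norm_num),
      s2_add_pow_mul 3 n 2 (by norm_num), s2_four, s2_two]
    push_cast; omega

lemma iter_witness : ∀ (m : ℕ) (k₁ k₂ : ℤ),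
    (∃ n t : ℕ, (s2 (n + t) : ℤ) - (s2 n : ℤ) = k₁ ∧
      (s2 (n + 2 * t) : ℤ) - (s2 n : ℤ) = k₂) →
    ∃ n t : ℕ, (s2 (n + t) : ℤ) - (s2 n : ℤ) = k₁ + m ∧
      (s2 (n + 2 * t) : ℤ) - (s2 n : ℤ) = k₂ := by
  intro m
  induction m with
  | zero => intro k₁ k₂ hw; simpa using hw
  | succ m ih =>
    intro k₁ k₂ hw
    obtain ⟨n, t, h1, h2⟩ := ih (k₁ + 1) k₂ (step_witness k₁ k₂ hw)
    refine ⟨n, t, ?_, h2⟩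
    push_cast
    omega

theorem stmt_9 (k₁ k₂ : ℤ) (h : k₂ ≤ k₁) :
    ∃ n t : ℕ, (s2 (n + t) : ℤ) - (s2 n : ℤ) = k₁ ∧
      (s2 (n + 2 * t) : ℤ) - (s2 n : ℤ) = k₂ := by
  obtain ⟨a, b, ha, hab⟩ : ∃ a b : ℕ, 1 ≤ a ∧ (2 + b : ℤ) - a = k₂ := by
    rcases le_or_gt 1 k₂ with hk | hk
    · exact ⟨1, (k₂ - 1).toNat, le_refl 1, by
        have : ((k₂ - 1).toNat : ℤ) = k₂ - 1 := Int.toNat_of_nonneg (by omega)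
        push_cast
        omega⟩
    · exact ⟨(2 - k₂).toNat, 0, by omega, by
        have : ((2 - k₂).toNat : ℤ) = 2 - k₂ := Int.toNat_of_nonneg (by omega)
        push_cast; omega⟩
  have hbase := base_witness a b ha
  rw [hab] at hbase
  have hab1 : (1 + b : ℤ) - a = k₂ - 1 := by omega
  rw [hab1] at hbase
  have hres := iter_witness (k₁ - k₂ + 1).toNat (k₂ - 1) k₂ hbase
  have hm : ((k₁ - k₂ + 1).toNat : ℤ) = k₁ - k₂ + 1 := Int.toNat_of_nonneg (by omega)
  rw [hm] at hres
  have heq : k₂ - 1 + (k₁ - k₂ + 1) = k₁ := by ring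
  rw [heq] at hres
  exact hres
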